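/- arXiv:2302.06257 — 2 statements merged into one kernel-verified Lean document; each statement's English description precedes it below -/
import Mathlib

section
/- Let G be a finite p-group (p ≥ 3) of nilpotency class 2 with cyclic center. Then there exists an abelian normal subgroup H of G of maximal order among all abelian subgroups of G such that exp(H) = |Z(G)|. -/
open FDRep CategoryTheory Subgroup
open scoped commutatorElement IsMulCommutative

/-- The minimal faithful permutation degree of `G`. -/
noncomputable def permDegree (G : Type*) [Group G] : ℕ :=
  sInf {n | ∃ f : G →* Equiv.Perm (Fin n), Function.Injective f}

/-- The minimal degree of a faithful quasi-permutation representation of `G` over `ℂ`: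
a faithful matrix representation in which every element has non-negative integral trace. -/
noncomputable def quasiPermDegree (G : Type*) [Group G] : ℕ :=
  sInf {n | ∃ ρ : G →* Matrix.GeneralLinearGroup (Fin n) ℂ,
    Function.Injective ρ ∧ ∀ g : G, ∃ m : ℕ, Matrix.trace ((ρ g : Matrix (Fin n) (Fin n) ℂ)) = (m : ℂ)}

/-- The set of degrees of irreducible complex characters of `G`. -/
def cdSet (G : Type) [Group G] : Set ℕ :=
  {n | ∃ V : FDRep ℂ G, Simple V ∧ Module.finrank ℂ V = n}

/-- The minimal number of generators of `G`. -/
noncomputable def minGens (G : Type*) [Group G] : ℕ :=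
  sInf {n | ∃ S : Finset G, S.card = n ∧ Subgroup.closure (S : Set G) = ⊤}


section auxlemmas

universe u v

lemma homCardLeAux : ∀ (m : ℕ) (X : Type u) [CommGroup X] [Finite X], Nat.card X = m →
    ∀ (Z : Type v) [CommGroup Z] [Finite Z], IsCyclic Z → Nat.card (X →* Z) ≤ Nat.card X := by
  intro m
  induction m using Nat.strong_induction_on with
  | _ m ih =>
    intro X _ _ hm Z _ _ hZ
    classical
    by_cases hx : ∃ x : X, x ≠ 1
    · obtain ⟨x, hx⟩ := hx
      set C := zpowers x with hC
      have hCcard : Nat.card C = orderOf x := Nat.card_zpowers x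
      have hxo : 2 ≤ orderOf x := by
        have h1 : orderOf x ≠ 1 := by simpa [orderOf_eq_one_iff] using hx
        have h0 : 0 < orderOf x := orderOf_pos x
        omega
      have hXsplit : Nat.card X = Nat.card (X ⧸ C) * orderOf x := by
        rw [← hCcard]; exact Subgroup.card_eq_card_quotient_mul_card_subgroup C
      have hQpos : 0 < Nat.card (X ⧸ C) := Nat.card_pos
      have hQlt : Nat.card (X ⧸ C) < m := by
        rw [← hm, hXsplit]; nlinarith
      let F : (X →* Z) →* Z := (MonoidHom.eval x)
      have hcard1 : Nat.card (X →* Z) = Nat.card ((X →* Z) ⧸ F.ker) * Nat.card F.ker :=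
        Subgroup.card_eq_card_quotient_mul_card_subgroup F.ker
      have hrange : Nat.card ((X →* Z) ⧸ F.ker) ≤ orderOf x := by
        rw [Nat.card_congr (QuotientGroup.quotientKerEquivRange F).toEquiv]
        letI : Fintype Z := Fintype.ofFinite Z
        have hsub : (F.range : Set Z) ⊆ ((Finset.univ.filter fun a : Z => a ^ orderOf x = 1) : Finset Z) := by
          rintro y ⟨f, rfl⟩
          simp only [Finset.coe_filter, Set.mem_setOf_eq, Finset.mem_univ, true_and]
          show (f x) ^ orderOf x = 1
          rw [← map_pow, pow_orderOf_eq_one, map_one]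
        have h1 : Nat.card F.range = (F.range : Set Z).ncard := Nat.card_coe_set_eq _
        have h2 : (F.range : Set Z).ncard ≤ (Finset.univ.filter fun a : Z => a ^ orderOf x = 1).card := by
          rw [← Set.ncard_coe_finset]
          exact Set.ncard_le_ncard hsub (Set.toFinite _)
        have h3 := IsCyclic.card_pow_eq_one_le (α := Z) (n := orderOf x) (orderOf_pos x)
        calc Nat.card F.range ≤ _ := h1.le.trans h2
          _ ≤ orderOf x := by
            refine le_trans (le_of_eq ?_) h3
            congr 1
      have hker : Nat.card F.ker ≤ Nat.card (X ⧸ C) := by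
        have hvan : ∀ f : F.ker, ∀ c ∈ C, (f : X →* Z) c = 1 := by
          rintro ⟨f, hf⟩ c ⟨k, rfl⟩
          have : f x = 1 := hf
          rw [map_zpow, this, one_zpow]
        haveI : Finite (X ⧸ C →* Z) := Finite.of_injective (fun f => (f : X ⧸ C → Z)) DFunLike.coe_injective
        let j : F.ker → (X ⧸ C →* Z) := fun f => QuotientGroup.lift C (f : X →* Z) (hvan f)
        have hj : Function.Injective j := by
          intro f g hfg
          ext1
          ext y
          have := DFunLike.congr_fun hfg (QuotientGroup.mk y)
          exact this
        calc Nat.card F.ker ≤ Nat.card (X ⧸ C →* Z) := Nat.card_le_card_of_injective j hj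
          _ ≤ Nat.card (X ⧸ C) := ih _ hQlt _ rfl Z hZ
      calc Nat.card (X →* Z) = _ := hcard1
        _ ≤ orderOf x * Nat.card (X ⧸ C) := Nat.mul_le_mul hrange hker
        _ = Nat.card X := by rw [hXsplit]; ring
    · push_neg at hx
      haveI : Subsingleton (X →* Z) := ⟨fun f g => by ext y; rw [hx y, map_one, map_one]⟩
      haveI : Unique (X →* Z) := uniqueOfSubsingleton 1
      rw [Nat.card_unique]
      exact Nat.card_pos

lemma homCardLe (X : Type u) (Z : Type v) [CommGroup X] [Finite X] [CommGroup Z] [Finite Z]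
    (hZ : IsCyclic Z) : Nat.card (X →* Z) ≤ Nat.card X :=
  homCardLeAux _ X rfl Z hZ

lemma isComm_closure {G : Type*} [Group G] (S : Set G)
    (hS : ∀ a ∈ S, ∀ b ∈ S, a * b = b * a) :
    ∀ a ∈ Subgroup.closure S, ∀ b ∈ Subgroup.closure S, a * b = b * a := by
  have h1 : ∀ a ∈ Subgroup.closure S, ∀ b ∈ S, b * a = a * b := by
    intro a ha b hb
    have hle : Subgroup.closure S ≤ Subgroup.centralizer {b} := by
      rw [Subgroup.closure_le]
      intro x hx
      rw [SetLike.mem_coe, Subgroup.mem_centralizer_iff]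
      intro h hh
      rw [Set.mem_singleton_iff] at hh
      rw [hh]
      exact hS b hb x hx
    exact Subgroup.mem_centralizer_iff.mp (hle ha) b rfl
  intro a ha b hb
  have hle : Subgroup.closure S ≤ Subgroup.centralizer {a} := by
    rw [Subgroup.closure_le]
    intro x hx
    rw [SetLike.mem_coe, Subgroup.mem_centralizer_iff]
    intro h hh
    rw [Set.mem_singleton_iff] at hh
    rw [hh]
    exact (h1 a ha x hx).symm
  exact Subgroup.mem_centralizer_iff.mp (hle hb) a rfl

end auxlemmas

section cls2
variable {G : Type*} [Group G] (hcl : ∀ x y : G, ⁅x, y⁆ ∈ Subgroup.center G)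

include hcl

lemma comm_left' (x y z : G) : ⁅x * y, z⁆ = ⁅x, z⁆ * ⁅y, z⁆ := by
  have h1 : ⁅x * y, z⁆ = x * ⁅y, z⁆ * x⁻¹ * ⁅x, z⁆ := by group
  have h2 := Subgroup.mem_center_iff.mp (hcl y z)
  have h3 : x * ⁅y, z⁆ * x⁻¹ = ⁅y, z⁆ := by rw [mul_inv_eq_iff_eq_mul]; exact h2 x
  rw [h1, h3]
  exact Subgroup.mem_center_iff.mp (hcl x z) _

lemma comm_right' (x y z : G) : ⁅x, y * z⁆ = ⁅x, y⁆ * ⁅x, z⁆ := by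
  have h1 : ⁅x, y * z⁆ = ⁅x, y⁆ * (y * ⁅x, z⁆ * y⁻¹) := by group
  have h2 := Subgroup.mem_center_iff.mp (hcl x z)
  have h3 : y * ⁅x, z⁆ * y⁻¹ = ⁅x, z⁆ := by rw [mul_inv_eq_iff_eq_mul]; exact h2 y
  rw [h1, h3]

lemma comm_pow_right' (x y : G) (n : ℕ) : ⁅x, y ^ n⁆ = ⁅x, y⁆ ^ n := by
  induction n with
  | zero => simp
  | succ n ih => rw [pow_succ, comm_right' hcl, ih, pow_succ]

lemma aux_move (x y : G) (n : ℕ) : y ^ n * x = ⁅y, x⁆ ^ n * (x * y ^ n) := by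
  set c := ⁅y, x⁆ with hc
  have hswap : ∀ (m : ℕ) (g : G), g * c ^ m = c ^ m * g :=
    fun m g => Subgroup.mem_center_iff.mp (pow_mem (hcl y x) m) g
  induction n with
  | zero => simp
  | succ n ih =>
    calc y ^ (n+1) * x = y * (y ^ n * x) := by rw [pow_succ', mul_assoc]
      _ = y * (c ^ n * (x * y ^ n)) := by rw [ih]
      _ = c ^ n * (y * (x * y ^ n)) := by rw [← mul_assoc, hswap n y, mul_assoc]
      _ = c ^ n * ((y * x) * y ^ n) := by simp only [mul_assoc]
      _ = c ^ n * ((c * (x * y)) * y ^ n) := by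
          rw [show y * x = c * (x * y) from by rw [hc]; group]
      _ = c ^ (n+1) * (x * y ^ (n+1)) := by
          rw [pow_succ c n, pow_succ' y n]; simp only [mul_assoc]

lemma mul_pow_formula (x y : G) (n : ℕ) :
    (x * y) ^ n = x ^ n * (y ^ n * ⁅y, x⁆ ^ (n.choose 2)) := by
  set c := ⁅y, x⁆ with hc
  have hswap : ∀ (m : ℕ) (g : G), g * c ^ m = c ^ m * g :=
    fun m g => Subgroup.mem_center_iff.mp (pow_mem (hcl y x) m) g
  induction n with
  | zero => simp
  | succ n ih =>
    have hch : n.choose 2 + n = (n+1).choose 2 := by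
      simp [Nat.choose_succ_succ, Nat.choose_one_right]; omega
    calc (x * y) ^ (n+1) = (x * y) ^ n * (x * y) := pow_succ _ _
      _ = (x ^ n * (y ^ n * c ^ (n.choose 2))) * (x * y) := by rw [ih]
      _ = x ^ n * (y ^ n * (c ^ (n.choose 2) * (x * y))) := by simp only [mul_assoc]
      _ = x ^ n * (y ^ n * (x * (c ^ (n.choose 2) * y))) := by
          rw [← mul_assoc (c ^ (n.choose 2)) x y, ← hswap (n.choose 2) x, mul_assoc]
      _ = x ^ n * ((y ^ n * x) * (c ^ (n.choose 2) * y)) := by simp only [mul_assoc]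
      _ = x ^ n * ((c ^ n * (x * y ^ n)) * (c ^ (n.choose 2) * y)) := by
          rw [aux_move hcl x y n]
      _ = x ^ n * (x * (y ^ n * (y * c ^ (n.choose 2 + n)))) := by
          simp only [mul_assoc]
          rw [← hswap n (x * (y ^ n * (c ^ (n.choose 2) * y)))]
          simp only [mul_assoc]
          rw [hswap n y, ← mul_assoc (c ^ (n.choose 2)) (c ^ n) y, ← pow_add,
            ← hswap (n.choose 2 + n) y]
      _ = x ^ (n+1) * (y ^ (n+1) * c ^ ((n+1).choose 2)) := by
          rw [hch, pow_succ x n, pow_succ y n]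
          simp only [mul_assoc]

end cls2

theorem stmt4 (G : Type*) [Group G] [Finite G] (p n : ℕ) (hp : p.Prime) (hp3 : 3 ≤ p)
    (hcard : Nat.card G = p ^ n) (hclass : commutator G ≤ Subgroup.center G)
    (hc : IsCyclic (Subgroup.center G)) :
    ∃ H : Subgroup G, H.Normal ∧ (∀ a b : H, a * b = b * a) ∧
      (∀ K : Subgroup G, (∀ a b : K, a * b = b * a) → Nat.card K ≤ Nat.card H) ∧
      Monoid.exponent H = Nat.card (Subgroup.center G) := by
  classical
  have hcl : ∀ x y : G, ⁅x, y⁆ ∈ center G := fun x y =>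
    hclass (Subgroup.commutator_mem_commutator (Subgroup.mem_top x) (Subgroup.mem_top y))
  set q := Nat.card (center G) with hqdef
  have hzq : ∀ c ∈ center G, c ^ q = 1 := by
    intro c hcmem
    have h := pow_card_eq_one' (G := ↥(center G)) (x := ⟨c, hcmem⟩)
    rw [hqdef]
    exact Subtype.ext_iff.mp h
  have hq_odd : Odd q := by
    have hdvd : q ∣ p ^ n := by
      rw [hqdef, ← hcard]; exact Subgroup.card_subgroup_dvd_card (center G)
    obtain ⟨k, -, hk⟩ := (Nat.dvd_prime_pow hp).mp hdvd
    rw [hk]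
    exact Odd.pow (hp.odd_of_ne_two (by omega))
  have hxqc : ∀ x : G, x ^ q ∈ center G := by
    intro x
    rw [Subgroup.mem_center_iff]
    intro g
    have h1 : ⁅g, x ^ q⁆ = 1 := by
      rw [comm_pow_right' hcl]
      exact hzq _ (hcl g x)
    exact commutatorElement_eq_one_iff_mul_comm.mp h1
  have hhom : ∀ x y : G, (x * y) ^ q = x ^ q * y ^ q := by
    intro x y
    have h1 := mul_pow_formula hcl x y q
    have h2 : ⁅y, x⁆ ^ (q.choose 2) = 1 := by
      have he : q.choose 2 = q * ((q - 1) / 2) := by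
        rw [Nat.choose_two_right,
          Nat.mul_div_assoc q (even_iff_two_dvd.mp (Nat.Odd.sub_odd hq_odd odd_one))]
      rw [he, pow_mul, hzq _ (hcl y x), one_pow]
    rw [h1, h2, mul_one]
  -- the quotient by the center is commutative
  letI : CommGroup (G ⧸ center G) :=
    { QuotientGroup.Quotient.group (center G) with
      mul_comm := fun a b => by
        refine QuotientGroup.induction_on a fun x => QuotientGroup.induction_on b fun y => ?_
        rw [← QuotientGroup.mk_mul, ← QuotientGroup.mk_mul]
        apply QuotientGroup.eq.mpr
        convert hcl y⁻¹ x⁻¹ using 1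
        group }
  -- the pairing homomorphism Θ
  let toC : G → (G →* ↥(center G)) := fun g =>
    { toFun := fun x => ⟨⁅g, x⁆, hcl g x⟩
      map_one' := Subtype.ext (commutatorElement_one_right g)
      map_mul' := fun a b => Subtype.ext (comm_right' hcl g a b) }
  have hvan : ∀ g : G, center G ≤ (toC g).ker := by
    intro g z hz
    refine MonoidHom.mem_ker.mpr (Subtype.ext ?_)
    exact commutatorElement_eq_one_iff_mul_comm.mpr (Subgroup.mem_center_iff.mp hz g)
  let Θ : G →* ((G ⧸ center G) →* ↥(center G)) :=
    { toFun := fun g => QuotientGroup.lift (center G) (toC g) (hvan g)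
      map_one' := by
        refine MonoidHom.ext fun ξ => QuotientGroup.induction_on ξ fun x => ?_
        refine Subtype.ext ?_
        simpa [toC] using commutatorElement_one_left x
      map_mul' := fun g g' => by
        refine MonoidHom.ext fun ξ => QuotientGroup.induction_on ξ fun x => ?_
        refine Subtype.ext ?_
        simpa [toC] using comm_left' hcl g g' x }
  let φ0 : G →* ↥(center G) :=
    { toFun := fun x => ⟨x ^ q, hxqc x⟩
      map_one' := Subtype.ext (one_pow q)
      map_mul' := fun a b => Subtype.ext (hhom a b) }
  have hφvan : center G ≤ φ0.ker := fun z hz => MonoidHom.mem_ker.mpr (Subtype.ext (hzq z hz))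
  let φbar := QuotientGroup.lift (center G) φ0 hφvan
  have hker : Θ.ker = center G := by
    ext g
    rw [MonoidHom.mem_ker]
    constructor
    · intro hg
      rw [Subgroup.mem_center_iff]
      intro y
      have h1 : Θ g (QuotientGroup.mk y) = 1 := by rw [hg]; rfl
      have h2 : ⁅g, y⁆ = 1 := by simpa [Θ, toC] using Subtype.ext_iff.mp h1
      exact (commutatorElement_eq_one_iff_mul_comm.mp h2).symm
    · intro hg
      refine MonoidHom.ext fun ξ => QuotientGroup.induction_on ξ fun x => ?_
      refine Subtype.ext ?_
      simpa [Θ, toC] using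
        commutatorElement_eq_one_iff_mul_comm.mpr (Subgroup.mem_center_iff.mp hg x).symm
  haveI : Finite ((G ⧸ center G) →* ↥(center G)) :=
    Finite.of_injective (fun f => (f : (G ⧸ center G) → ↥(center G))) DFunLike.coe_injective
  have hrangecard : Nat.card Θ.range = Nat.card (G ⧸ center G) := by
    have h1 : Nat.card (G ⧸ Θ.ker) = Nat.card Θ.range :=
      Nat.card_congr (QuotientGroup.quotientKerEquivRange Θ).toEquiv
    have h2 : Nat.card (G ⧸ Θ.ker) = Nat.card (G ⧸ center G) :=
      Nat.card_congr (Subgroup.quotientEquivOfEq hker)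
    omega
  have htot : Θ.range = ⊤ := by
    apply Subgroup.eq_top_of_card_eq
    have hle : Nat.card Θ.range ≤ Nat.card ((G ⧸ center G) →* ↥(center G)) :=
      Nat.card_le_card_of_injective _ Subtype.val_injective
    have hle2 := homCardLe (G ⧸ center G) ↥(center G) hc
    omega
  obtain ⟨g₀, hg₀'⟩ : ∃ g, Θ g = φbar := by
    have hmem : φbar ∈ Θ.range := by rw [htot]; exact Subgroup.mem_top φbar
    exact hmem
  have hg₀ : ∀ x : G, ⁅g₀, x⁆ = x ^ q := by
    intro x
    have h1 := DFunLike.congr_fun hg₀' (QuotientGroup.mk x)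
    exact Subtype.ext_iff.mp h1
  -- construct H
  set K₀ : Subgroup G := Subgroup.closure ((center G : Set G) ∪ {g₀}) with hK₀def
  have hK₀comm : ∀ a ∈ K₀, ∀ b ∈ K₀, a * b = b * a := by
    apply isComm_closure
    rintro a (ha | ha) b hb
    · exact (Subgroup.mem_center_iff.mp ha b).symm
    · rw [Set.mem_singleton_iff] at ha; subst ha
      rcases hb with hb | hb
      · exact Subgroup.mem_center_iff.mp hb a
      · rw [Set.mem_singleton_iff] at hb; subst hb; rfl
  haveI : Finite (Subgroup G) :=
    Finite.of_injective (fun A : Subgroup G => (A : Set G)) SetLike.coe_injective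
  set SS : Set (Subgroup G) := {A | (∀ a ∈ A, ∀ b ∈ A, a * b = b * a) ∧ K₀ ≤ A} with hSSdef
  obtain ⟨H, hHS, hHmax⟩ := Set.Finite.exists_maximalFor (fun A : Subgroup G => Nat.card A) SS
    (Set.toFinite SS) ⟨K₀, hK₀comm, le_rfl⟩
  obtain ⟨hHcomm, hK₀H⟩ := hHS
  have hcard_le : ∀ (A B : Subgroup G), A ≤ B → Nat.card A ≤ Nat.card B := fun A B h =>
    Nat.card_le_card_of_injective (Subgroup.inclusion h) (Subgroup.inclusion_injective h)
  have hsup : ∀ A ∈ SS, H ≤ A → A = H := by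
    intro A hA hHA
    have h1 : Nat.card H ≤ Nat.card A := hcard_le _ _ hHA
    have h2 := hHmax hA h1
    have h3 : (H : Set G) ⊆ (A : Set G) := hHA
    have h4 : (A : Set G).ncard ≤ (H : Set G).ncard := by
      rw [← Nat.card_coe_set_eq, ← Nat.card_coe_set_eq]
      rw [SetLike.coe_sort_coe, SetLike.coe_sort_coe]
      omega
    exact SetLike.coe_injective (Set.eq_of_subset_of_ncard_le h3 h4).symm
  have hZH : center G ≤ H := fun z hz => hK₀H (Subgroup.subset_closure (Or.inl hz))
  have hg₀H : g₀ ∈ H := hK₀H (Subgroup.subset_closure (Or.inr rfl))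
  have hself : ∀ x : G, (∀ h ∈ H, x * h = h * x) → x ∈ H := by
    intro x hx
    set A : Subgroup G := Subgroup.closure ((H : Set G) ∪ {x}) with hAdef
    have hAcomm : ∀ a ∈ A, ∀ b ∈ A, a * b = b * a := by
      apply isComm_closure
      rintro a (ha | ha) b (hb | hb)
      · exact hHcomm a ha b hb
      · rw [Set.mem_singleton_iff] at hb; subst hb; exact (hx a ha).symm
      · rw [Set.mem_singleton_iff] at ha; subst ha; exact hx b hb
      · rw [Set.mem_singleton_iff] at ha; subst ha
        rw [Set.mem_singleton_iff] at hb; subst hb; rfl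
    have hHA : H ≤ A := fun h hh => Subgroup.subset_closure (Or.inl hh)
    have hAS : A ∈ SS := ⟨hAcomm, le_trans hK₀H hHA⟩
    have hAH : A = H := hsup A hAS hHA
    rw [← hAH]
    exact Subgroup.subset_closure (Or.inr rfl)
  have hHq : ∀ h : G, h ∈ H → h ^ q = 1 := by
    intro h hh
    rw [← hg₀ h]
    exact commutatorElement_eq_one_iff_mul_comm.mpr (hHcomm g₀ hg₀H h hh)
  refine ⟨H, ?_, ?_, ?_, ?_⟩
  · constructor
    intro h hh g
    have hrw : g * h * g⁻¹ = ⁅g, h⁆ * h := by group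
    rw [hrw]
    exact Subgroup.mul_mem _ (hZH (hcl g h)) hh
  · exact fun a b => Subtype.ext (hHcomm a a.2 b b.2)
  · intro K hK
    have hKcomm : ∀ a ∈ K, ∀ b ∈ K, a * b = b * a := fun a ha b hb =>
      Subtype.ext_iff.mp (hK ⟨a, ha⟩ ⟨b, hb⟩)
    letI : IsMulCommutative H := ⟨⟨fun a b => Subtype.ext (hHcomm a a.2 b b.2)⟩⟩
    set N' : Subgroup ↥H := (K ⊓ H).subgroupOf H with hN'def
    let f0 : ↥K → (↥H →* ↥(center G)) := fun a =>
      { toFun := fun h => ⟨⁅(a : G), (h : G)⁆, hcl _ _⟩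
        map_one' := Subtype.ext (by simpa using commutatorElement_one_right (a : G))
        map_mul' := fun h h' => Subtype.ext (comm_right' hcl _ _ _) }
    have hvanker : ∀ a : ↥K, N' ≤ (f0 a).ker := by
      intro a h hh
      rw [hN'def, Subgroup.mem_subgroupOf] at hh
      refine MonoidHom.mem_ker.mpr (Subtype.ext ?_)
      exact commutatorElement_eq_one_iff_mul_comm.mpr (hKcomm _ a.2 _ hh.1)
    let Ψ : ↥K →* ((↥H ⧸ N') →* ↥(center G)) :=
      { toFun := fun a => QuotientGroup.lift N' (f0 a) (hvanker a)
        map_one' := by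
          refine MonoidHom.ext fun ξ => QuotientGroup.induction_on ξ fun h => ?_
          refine Subtype.ext ?_
          simpa [f0] using commutatorElement_one_left (h : G)
        map_mul' := fun a b => by
          refine MonoidHom.ext fun ξ => QuotientGroup.induction_on ξ fun h => ?_
          refine Subtype.ext ?_
          simpa [f0] using comm_left' hcl (a : G) (b : G) (h : G) }
    have hkerΨ : Ψ.ker = (K ⊓ H).subgroupOf K := by
      ext a
      rw [MonoidHom.mem_ker, Subgroup.mem_subgroupOf]
      constructor
      · intro ha
        refine ⟨a.2, ?_⟩
        apply hself
        intro h hh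
        have h1 := DFunLike.congr_fun ha (QuotientGroup.mk (⟨h, hh⟩ : ↥H))
        have h2 : ⁅(a : G), h⁆ = 1 := by simpa [Ψ, f0] using Subtype.ext_iff.mp h1
        exact commutatorElement_eq_one_iff_mul_comm.mp h2
      · intro ha
        refine MonoidHom.ext fun ξ => QuotientGroup.induction_on ξ fun h => ?_
        refine Subtype.ext ?_
        simpa [Ψ, f0] using
          commutatorElement_eq_one_iff_mul_comm.mpr (hHcomm _ ha.2 _ h.2)
    haveI : Finite ((↥H ⧸ N') →* ↥(center G)) :=
      Finite.of_injective (fun f => (f : (↥H ⧸ N') → ↥(center G))) DFunLike.coe_injective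
    have c1 : Nat.card ↥K = Nat.card (↥K ⧸ Ψ.ker) * Nat.card Ψ.ker :=
      Subgroup.card_eq_card_quotient_mul_card_subgroup Ψ.ker
    have c2 : Nat.card (↥K ⧸ Ψ.ker) = Nat.card Ψ.range :=
      Nat.card_congr (QuotientGroup.quotientKerEquivRange Ψ).toEquiv
    have c3 : Nat.card Ψ.range ≤ Nat.card ((↥H ⧸ N') →* ↥(center G)) :=
      Nat.card_le_card_of_injective _ Subtype.val_injective
    have c4 : Nat.card ((↥H ⧸ N') →* ↥(center G)) ≤ Nat.card (↥H ⧸ N') :=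
      homCardLe _ _ hc
    have c5 : Nat.card Ψ.ker = Nat.card ↥(K ⊓ H) := by
      rw [hkerΨ]
      exact Nat.card_congr (Subgroup.subgroupOfEquivOfLe inf_le_left).toEquiv
    have c6 : Nat.card ↥H = Nat.card (↥H ⧸ N') * Nat.card N' :=
      Subgroup.card_eq_card_quotient_mul_card_subgroup N'
    have c7 : Nat.card N' = Nat.card ↥(K ⊓ H) := by
      rw [hN'def]
      exact Nat.card_congr (Subgroup.subgroupOfEquivOfLe inf_le_right).toEquiv
    have hpos : 0 < Nat.card ↥(K ⊓ H) := Nat.card_pos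
    nlinarith [c1, c2, c3, c4, c5, c6, c7, hpos]
  · apply Nat.dvd_antisymm
    · apply Monoid.exponent_dvd_of_forall_pow_eq_one
      intro h
      refine Subtype.ext ?_
      simpa using hHq (h : G) h.2
    · obtain ⟨z, hz⟩ := IsCyclic.exists_generator (α := ↥(center G))
      have hzord : orderOf z = q := by
        have h1 : Nat.card (Subgroup.zpowers z) = orderOf z := Nat.card_zpowers z
        have h2 : Subgroup.zpowers z = ⊤ := by
          rw [Subgroup.eq_top_iff']; exact hz
        rw [h2, Subgroup.card_top] at h1
        exact h1.symm
      have hmem : (z : G) ∈ H := hZH z.2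
      have hord : orderOf (⟨(z : G), hmem⟩ : ↥H) = q := by
        rw [Subgroup.orderOf_mk, Subgroup.orderOf_coe, hzord]
      rw [← hord]
      exact Monoid.order_dvd_exponent _
end

section
/- Let G be a finite non-abelian p-group such that d(Z(G) ∩ G') = d(Z(G)). Then every collection X of irreducible characters of G with trivial joint kernel, minimal with respect to this property (no proper subset has trivial joint kernel) and of size d(Z(G)), consists entirely of nonlinear characters. -/
open FDRep CategoryTheory Subgroup

lemma minGens_le {G : Type*} [Group G] (S : Finset G) (hS : Subgroup.closure (S : Set G) = ⊤) :
    minGens G ≤ S.card := Nat.sInf_le ⟨S, rfl, hS⟩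

lemma gen_mem_of_equiv {G H : Type*} [Group G] [Group H] (e : G ≃* H) (n : ℕ)
    (h : ∃ S : Finset G, S.card = n ∧ Subgroup.closure (S : Set G) = ⊤) :
    ∃ S : Finset H, S.card = n ∧ Subgroup.closure (S : Set H) = ⊤ := by
  classical
  obtain ⟨S, hc, hcl⟩ := h
  refine ⟨S.image e, by rw [Finset.card_image_of_injective _ e.injective, hc], ?_⟩
  have : (↑(S.image e) : Set H) = e '' (S : Set G) := by ext x; simp
  rw [this]; rw [show (⇑e '' (S:Set G)) = ⇑e.toMonoidHom '' (S:Set G) from rfl, ← MonoidHom.map_closure e.toMonoidHom, hcl]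
  exact Subgroup.map_top_of_surjective _ e.surjective

lemma minGens_congr {G H : Type*} [Group G] [Group H] (e : G ≃* H) :
    minGens G = minGens H := by
  unfold minGens
  congr 1
  ext n
  exact ⟨gen_mem_of_equiv e n, gen_mem_of_equiv e.symm n⟩

lemma card_omega_cyclic (p k : ℕ) (hp : p.Prime) (hk : 1 ≤ k) :
    Nat.card {x : Multiplicative (ZMod (p ^ k)) // x ^ p = 1} = p := by
  classical
  haveI : NeZero (p ^ k) := ⟨pow_ne_zero _ hp.ne_zero⟩
  haveI : Fact p.Prime := ⟨hp⟩
  set M := Multiplicative (ZMod (p ^ k))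
  haveI : Fintype M := (inferInstance : Fintype (ZMod (p ^ k)))
  apply le_antisymm
  · have h1 : Nat.card {x : M // x ^ p = 1} = Finset.card {a : M | a ^ p = 1} := by
      rw [Nat.card_eq_fintype_card]
      exact Fintype.card_subtype _
    rw [h1]
    exact IsCyclic.card_pow_eq_one_le hp.pos
  · -- there is an element of order p
    have hcard : p ∣ Fintype.card M := by
      rw [show Fintype.card M = p ^ k from (Fintype.card_congr Multiplicative.ofAdd).symm.trans (ZMod.card (p ^ k))]
      exact dvd_pow_self p (by omega)
    obtain ⟨g, hg⟩ := exists_prime_orderOf_dvd_card p hcard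
    have hmem : ∀ x : M, x ∈ zpowers g → x ^ p = 1 := by
      rintro x ⟨m, rfl⟩
      have hgp : g ^ p = 1 := by have h := pow_orderOf_eq_one g; rwa [hg] at h
      rw [← zpow_natCast, ← zpow_mul, mul_comm, zpow_mul, zpow_natCast, hgp, one_zpow]
    have : Nat.card (zpowers g) ≤ Nat.card {x : M // x ^ p = 1} := by
      apply Nat.card_le_card_of_injective (fun y => ⟨(y : M), hmem _ y.2⟩)
      intro a b hab
      simp only [Subtype.mk.injEq] at hab
      exact Subtype.ext hab
    rwa [Nat.card_zpowers, hg] at this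


section Pi
variable {ι : Type} [Fintype ι] (p : ℕ) (kk : ι → ℕ)

lemma exists_gens_pi (hp : p.Prime) (hk : ∀ i, 1 ≤ kk i) :
    ∃ S : Finset (∀ i, Multiplicative (ZMod (p ^ kk i))),
      S.card ≤ Fintype.card ι ∧ Subgroup.closure (S : Set (∀ i, Multiplicative (ZMod (p ^ kk i)))) = ⊤ := by
  classical
  haveI : ∀ i, NeZero (p ^ kk i) := fun i => ⟨pow_ne_zero _ hp.ne_zero⟩
  set u : ∀ i, Multiplicative (ZMod (p ^ kk i)) := fun i => Multiplicative.ofAdd 1 with hu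
  have htop : ∀ i, zpowers (u i) = ⊤ := by
    intro i
    apply Subgroup.eq_top_of_card_eq
    rw [Nat.card_zpowers]
    have h1 : orderOf (u i) = p ^ kk i :=
      (orderOf_ofAdd_eq_addOrderOf _).trans (ZMod.addOrderOf_one _)
    rw [h1, Nat.card_congr Multiplicative.toAdd, Nat.card_zmod]
  refine ⟨Finset.image (fun i => Pi.mulSingle i (u i)) Finset.univ,
    (Finset.card_image_le).trans (by simp), ?_⟩
  rw [eq_top_iff]
  intro x _
  rw [← Finset.univ_prod_mulSingle x]
  apply Subgroup.prod_mem
  intro i _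
  have hx : x i ∈ zpowers (u i) := by rw [htop i]; trivial
  obtain ⟨m, hm⟩ := hx
  have heq : Pi.mulSingle i (x i) =
      (MonoidHom.mulSingle (fun j => Multiplicative (ZMod (p ^ kk j))) i (u i)) ^ m := by
    simp only [] at hm
    rw [← map_zpow (MonoidHom.mulSingle (fun j => Multiplicative (ZMod (p ^ kk j))) i), hm]
    rfl
  rw [heq]
  exact zpow_mem (subset_closure (by simp [Finset.mem_image])) m

def redAdd (hk : ∀ i, 1 ≤ kk i) (i : ι) : ZMod (p ^ kk i) →+* ZMod p :=
  ZMod.castHom (dvd_pow_self p (Nat.one_le_iff_ne_zero.mp (hk i))) (ZMod p)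

def red (hk : ∀ i, 1 ≤ kk i) :
    (∀ i, Multiplicative (ZMod (p ^ kk i))) →* Multiplicative (ι → ZMod p) where
  toFun x := Multiplicative.ofAdd fun i => redAdd p kk hk i (x i).toAdd
  map_one' := by
    apply Multiplicative.toAdd.injective
    funext i
    simp
  map_mul' x y := by
    apply Multiplicative.toAdd.injective
    funext i
    simp [toAdd_mul]

lemma red_surj (hp : p.Prime) (hk : ∀ i, 1 ≤ kk i) : Function.Surjective (red p kk hk) := by
  haveI : NeZero p := ⟨hp.ne_zero⟩
  intro y
  refine ⟨fun i => Multiplicative.ofAdd (((y.toAdd i).val : ℕ) : ZMod (p ^ kk i)), ?_⟩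
  apply Multiplicative.toAdd.injective
  funext i
  show (redAdd p kk hk i) ((((y.toAdd i).val : ℕ) : ZMod (p ^ kk i))) = y.toAdd i
  rw [map_natCast]
  exact ZMod.natCast_rightInverse (y.toAdd i)

lemma minGens_pi_ge (hp : p.Prime) (hk : ∀ i, 1 ≤ kk i)
    (S : Finset (∀ i, Multiplicative (ZMod (p ^ kk i)))) (hS : Subgroup.closure (S : Set (∀ i, Multiplicative (ZMod (p ^ kk i)))) = ⊤) :
    Fintype.card ι ≤ S.card := by
  classical
  haveI : Fact p.Prime := ⟨hp⟩
  set f := red p kk hk with hf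
  set g : (∀ i, Multiplicative (ZMod (p ^ kk i))) → (ι → ZMod p) :=
    fun x => (f x).toAdd with hg
  set N : Submodule (ZMod p) (ι → ZMod p) := Submodule.span (ZMod p) ↑(S.image g) with hN
  have hall : ∀ x, g x ∈ N := by
    set H : Subgroup (∀ i, Multiplicative (ZMod (p ^ kk i))) :=
      { carrier := {x | g x ∈ N}
        one_mem' := by simp [hg, map_one]
        mul_mem' := by
          intro a b ha hb
          simp only [Set.mem_setOf_eq, hg, map_mul, toAdd_mul] at *
          exact N.add_mem ha hb
        inv_mem' := by
          intro a ha
          simp only [Set.mem_setOf_eq, hg, map_inv, toAdd_inv] at *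
          exact N.neg_mem ha } with hH
    have hsub : Subgroup.closure (S : Set (∀ i, Multiplicative (ZMod (p ^ kk i)))) ≤ H :=
      (closure_le _).mpr fun s hs => Submodule.subset_span (Finset.mem_coe.mpr (Finset.mem_image_of_mem g hs))
    intro x
    exact hsub (hS ▸ Subgroup.mem_top x)
  have hNtop : N = ⊤ := by
    rw [Submodule.eq_top_iff']
    intro w
    obtain ⟨x, hx⟩ := red_surj p kk hp hk (Multiplicative.ofAdd w)
    have h2 : Multiplicative.toAdd (Multiplicative.ofAdd w) ∈ N := by
      rw [← hx]; exact hall x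
    simpa using h2
  have hfin := finrank_span_le_card (R := ZMod p) (↑(S.image g) : Set (ι → ZMod p))
  rw [Finset.toFinset_coe] at hfin
  rw [← hN, hNtop] at hfin
  calc Fintype.card ι = Module.finrank (ZMod p) (ι → ZMod p) := (Module.finrank_pi _).symm
    _ = Module.finrank (ZMod p) (⊤ : Submodule (ZMod p) (ι → ZMod p)) := (finrank_top _ _).symm
    _ ≤ (S.image g).card := hfin
    _ ≤ S.card := Finset.card_image_le
end Pi

lemma card_omega_pi {ι : Type} [Fintype ι] (p : ℕ) (kk : ι → ℕ) (hp : p.Prime) (hk : ∀ i, 1 ≤ kk i) :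
    Nat.card {x : ∀ i, Multiplicative (ZMod (p ^ kk i)) // x ^ p = 1} = p ^ Fintype.card ι := by
  classical
  have e1 : {x : ∀ i, Multiplicative (ZMod (p ^ kk i)) // x ^ p = 1} ≃
      {x : ∀ i, Multiplicative (ZMod (p ^ kk i)) // ∀ i, (x i) ^ p = 1} :=
    Equiv.subtypeEquivRight (by intro x; simp [funext_iff])
  rw [Nat.card_congr (e1.trans (Equiv.subtypePiEquivPi (p := fun i (b : Multiplicative (ZMod (p ^ kk i))) => b ^ p = 1)))]
  rw [Nat.card_pi]
  calc ∏ i, Nat.card {b : Multiplicative (ZMod (p ^ kk i)) // b ^ p = 1}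
      = ∏ _i : ι, p := Finset.prod_congr rfl fun i _ => card_omega_cyclic p (kk i) hp (hk i)
    _ = p ^ Fintype.card ι := by rw [Finset.prod_const, Finset.card_univ]

lemma card_omega_group {H : Type} [CommGroup H] [Finite H] {p : ℕ} (hp : p.Prime)
    (hH : IsPGroup p H) :
    Nat.card {x : H // x ^ p = 1} = p ^ minGens H := by
  classical
  obtain ⟨κ, hfin, nn, h1, ⟨e⟩⟩ := CommGroup.equiv_prod_multiplicative_zmod_of_finite H
  have hP : IsPGroup p (∀ i, Multiplicative (ZMod (nn i))) := hH.of_equiv e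
  have hkk : ∀ i : κ, ∃ k, 1 ≤ k ∧ nn i = p ^ k := by
    intro i
    have horder : orderOf (Pi.mulSingle (M := fun j => Multiplicative (ZMod (nn j))) i (Multiplicative.ofAdd (1 : ZMod (nn i)))) = nn i := by
      rw [orderOf_piMulSingle, orderOf_ofAdd_eq_addOrderOf, ZMod.addOrderOf_one]
    obtain ⟨k, hk⟩ := hP (Pi.mulSingle (M := fun j => Multiplicative (ZMod (nn j))) i (Multiplicative.ofAdd (1 : ZMod (nn i))))
    have hdvd : nn i ∣ p ^ k := by
      rw [← horder]; exact orderOf_dvd_of_pow_eq_one hk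
    obtain ⟨j, hj, hje⟩ := (Nat.dvd_prime_pow hp).mp hdvd
    refine ⟨j, ?_, hje⟩
    rcases Nat.eq_zero_or_pos j with rfl | hj0
    · have := h1 i; simp at hje; omega
    · exact hj0
  choose kk hkk1 hkk2 using hkk
  have hnn : nn = fun i => p ^ kk i := funext hkk2
  subst hnn
  have hmg : minGens H = Fintype.card κ := by
    rw [minGens_congr e]
    apply le_antisymm
    · obtain ⟨S, hSc, hScl⟩ := exists_gens_pi p kk hp hkk1
      exact le_trans (minGens_le S hScl) hSc
    · have hne : {n | ∃ S : Finset (∀ i, Multiplicative (ZMod (p ^ kk i))),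
          S.card = n ∧ Subgroup.closure (S : Set (∀ i, Multiplicative (ZMod (p ^ kk i)))) = ⊤}.Nonempty := by
        obtain ⟨S, _, hScl⟩ := exists_gens_pi p kk hp hkk1
        exact ⟨S.card, S, rfl, hScl⟩
      obtain ⟨T, hTc, hTcl⟩ := Nat.sInf_mem hne
      rw [show minGens (∀ i, Multiplicative (ZMod (p ^ kk i))) = sInf _ from rfl, ← hTc]
      exact minGens_pi_ge p kk hp hkk1 T hTcl
  rw [hmg, ← card_omega_pi p kk hp hkk1]
  apply Nat.card_congr
  refine e.toEquiv.subtypeEquiv fun x => ?_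
  rw [show e.toEquiv x = e x from rfl, ← map_pow]
  exact ⟨fun hx => by rw [hx, map_one], fun hx => e.injective (by rw [hx, map_one])⟩

lemma mem_of_pow_eq_one {A : Type} [CommGroup A] [Finite A] {p : ℕ} (hp : p.Prime)
    (hA : IsPGroup p A) (B : Subgroup A) (h : minGens B = minGens A) :
    ∀ a : A, a ^ p = 1 → a ∈ B := by
  have hB : IsPGroup p B := hA.to_subgroup B
  have c1 := card_omega_group hp hB
  have c2 := card_omega_group hp hA
  set f : {x : B // x ^ p = 1} → {x : A // x ^ p = 1} :=
    fun y => ⟨(y.1 : A), by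
      have := y.2
      have h2 : ((y.1 ^ p : B) : A) = ((1 : B) : A) := congrArg _ this
      simpa using h2⟩ with hf
  have hinj : Function.Injective f := by
    intro a b hab
    simp only [hf, Subtype.mk.injEq] at hab
    exact Subtype.ext (Subtype.ext hab)
  have hbij : Function.Bijective f :=
    (Nat.bijective_iff_injective_and_card f).mpr ⟨hinj, by rw [c1, c2, h]⟩
  intro a ha
  obtain ⟨y, hy⟩ := hbij.2 ⟨a, ha⟩
  have : (y.1 : A) = a := congrArg Subtype.val hy
  rw [← this]
  exact y.1.2

lemma end_comm {V : Type*} [AddCommGroup V] [Module ℂ V] [FiniteDimensional ℂ V]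
    (h : Module.finrank ℂ V ≤ 1) (f g : V →ₗ[ℂ] V) : f * g = g * f := by
  interval_cases hr : Module.finrank ℂ V
  · haveI : Subsingleton V := Module.finrank_zero_iff.mp hr
    ext x
    exact Subsingleton.elim _ _
  · obtain ⟨v, hv0, hv⟩ := finrank_eq_one_iff'.mp hr
    obtain ⟨a, ha⟩ := hv (f v)
    obtain ⟨b, hb⟩ := hv (g v)
    ext w
    obtain ⟨c, rfl⟩ := hv w
    show f (g (c • v)) = g (f (c • v))
    simp only [map_smul, ← hb, ← ha, smul_smul]
    congr 1
    ring

def mker {G M : Type*} [Group G] [Monoid M] (f : G →* M) : Subgroup G where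
  carrier := {g | f g = 1}
  one_mem' := map_one f
  mul_mem' := by
    intro a b ha hb
    simp only [Set.mem_setOf_eq] at *
    rw [map_mul, ha, hb, one_mul]
  inv_mem' := by
    intro a ha
    simp only [Set.mem_setOf_eq] at *
    calc f a⁻¹ = f a⁻¹ * f a := by rw [ha, mul_one]
      _ = 1 := by rw [← map_mul, inv_mul_cancel, map_one]

lemma mem_mker {G M : Type*} [Group G] [Monoid M] {f : G →* M} {g : G} :
    g ∈ mker f ↔ f g = 1 := Iff.rfl

lemma mker_normal {G M : Type*} [Group G] [Monoid M] (f : G →* M) : (mker f).Normal := by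
  constructor
  intro a ha g
  show f (g * a * g⁻¹) = 1
  rw [map_mul, map_mul, ha, mul_one, ← map_mul, mul_inv_cancel, map_one]

theorem stmt9 (G : Type) [Group G] [Finite G] (p n : ℕ) (hp : p.Prime)
    (hcard : Nat.card G = p ^ n) (hna : ¬ ∀ x y : G, x * y = y * x)
    (hd : minGens ↥(Subgroup.center G ⊓ commutator G) = minGens ↥(Subgroup.center G))
    (ι : Type) [Finite ι] (χ : ι → FDRep ℂ G) (hinj : Function.Injective χ)
    (hirr : ∀ i, Simple (χ i)) (hcardι : Nat.card ι = minGens ↥(Subgroup.center G))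
    (hker : ∀ g : G, (∀ i, (χ i).ρ g = 1) → g = 1)
    (hmin : ∀ s : Set ι, s ≠ Set.univ → ∃ g : G, g ≠ 1 ∧ ∀ i ∈ s, (χ i).ρ g = 1) :
    ∀ i, 1 < Module.finrank ℂ (χ i) := by
  intro i
  by_contra hle
  push_neg at hle
  haveI : Fact p.Prime := ⟨hp⟩
  have hpg : IsPGroup p G := IsPGroup.of_card hcard
  -- the commutator subgroup is killed by a representation of degree ≤ 1
  have hcomm : ∀ g ∈ commutator G, (χ i).ρ g = 1 := by
    have hle' : commutator G ≤ mker ((χ i).ρ) := by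
      rw [commutator_def, Subgroup.commutator_le]
      intro g₁ _ g₂ _
      rw [mem_mker]
      have hc := end_comm hle ((χ i).ρ g₁) ((χ i).ρ g₂)
      show (χ i).ρ (g₁ * g₂ * g₁⁻¹ * g₂⁻¹) = 1
      rw [map_mul, map_mul, map_mul, hc, mul_assoc ((χ i).ρ g₂), ← map_mul,
        mul_inv_cancel, map_one, mul_one, ← map_mul, mul_inv_cancel, map_one]
    exact fun g hg => hle' hg
  -- the joint kernel of the other representations
  let N : Subgroup G :=
    { carrier := {g | ∀ j, j ≠ i → (χ j).ρ g = 1}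
      one_mem' := fun j _ => map_one _
      mul_mem' := by
        intro a b ha hb j hj
        rw [map_mul, ha j hj, hb j hj, one_mul]
      inv_mem' := by
        intro a ha j hj
        calc (χ j).ρ a⁻¹ = (χ j).ρ a⁻¹ * (χ j).ρ a := by rw [ha j hj, mul_one]
          _ = 1 := by rw [← map_mul, inv_mul_cancel, map_one] }
  have hmemN : ∀ g : G, g ∈ N ↔ ∀ j, j ≠ i → (χ j).ρ g = 1 := fun g => Iff.rfl
  haveI hNn : N.Normal := by
    constructor
    intro a ha g j hj
    rw [map_mul, map_mul, (hmemN a).mp ha j hj, mul_one, ← map_mul, mul_inv_cancel, map_one]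
  -- N is nontrivial
  obtain ⟨g₀, hg₀1, hg₀⟩ := hmin {j | j ≠ i} (by
    intro h
    have := Set.eq_univ_iff_forall.mp h i
    simp at this)
  have hg₀N : g₀ ∈ N := fun j hj => hg₀ j hj
  have hNbot : N ≠ ⊥ := fun h => hg₀1 (by rwa [h, Subgroup.mem_bot] at hg₀N)
  -- p divides the cardinality of N
  have hpgN : IsPGroup p N := hpg.to_subgroup N
  obtain ⟨k, hk⟩ := (IsPGroup.iff_card).mp hpgN
  have hlt : 1 < Nat.card N := (Subgroup.one_lt_card_iff_ne_bot N).mpr hNbot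
  have hkne : k ≠ 0 := by
    rintro rfl
    rw [hk, pow_zero] at hlt
    omega
  have hpdvd : p ∣ Nat.card N := hk ▸ dvd_pow_self p hkne
  -- a nontrivial fixed point for the conjugation action: N meets the center
  have hpgC : IsPGroup p (ConjAct G) := hpg.of_equiv ConjAct.toConjAct
  have h1fix : (1 : N) ∈ MulAction.fixedPoints (ConjAct G) N := by
    intro g
    apply Subtype.ext
    rw [ConjAct.Subgroup.val_conj_smul]
    show ConjAct.ofConjAct g * ((1 : N) : G) * (ConjAct.ofConjAct g)⁻¹ = ((1 : N) : G)
    simp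
  obtain ⟨z, hzfix, hz1⟩ :=
    hpgC.exists_fixed_point_of_prime_dvd_card_of_fixed_point (α := ↥N) hpdvd h1fix
  have hzc : (z : G) ∈ Subgroup.center G := by
    rw [Subgroup.mem_center_iff]
    intro g
    have h3 := hzfix (ConjAct.toConjAct g)
    have h4 := congrArg Subtype.val h3
    rw [ConjAct.Subgroup.val_conj_smul, ConjAct.toConjAct_smul] at h4
    have h5 : g * (z : G) = (g * (z : G) * g⁻¹) * g := by group
    rw [h4] at h5
    exact h5
  have hz1' : (z : G) ≠ 1 := fun h => hz1 (Subtype.ext h.symm)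
  -- an element of order p in N ∩ Z(G)
  obtain ⟨k0, hk0⟩ := hpg (z : G)
  obtain ⟨m, hmle, hm⟩ := (Nat.dvd_prime_pow hp).mp (orderOf_dvd_of_pow_eq_one hk0)
  have hm1 : 1 ≤ m := by
    rcases Nat.eq_zero_or_pos m with rfl | h
    · rw [pow_zero] at hm
      exact absurd (orderOf_eq_one_iff.mp hm) hz1'
    · exact h
  set w : G := (z : G) ^ (p ^ (m - 1)) with hw
  have hwp : w ^ p = 1 := by
    rw [hw, ← pow_mul, ← pow_succ, Nat.sub_add_cancel hm1, ← hm, pow_orderOf_eq_one]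
  have hwne : w ≠ 1 := by
    intro h
    have h6 := orderOf_dvd_of_pow_eq_one (h ▸ rfl : (z : G) ^ (p ^ (m - 1)) = 1)
    rw [hm] at h6
    have h7 := (Nat.pow_dvd_pow_iff_le_right hp.one_lt).mp h6
    omega
  have hwc : w ∈ Subgroup.center G := (Subgroup.center G).pow_mem hzc _
  have hwN : w ∈ N := N.pow_mem z.2 _
  -- w lies in the commutator subgroup
  have hA : IsPGroup p ↥(Subgroup.center G) := hpg.to_subgroup _
  have hmge : minGens ↥((Subgroup.center G ⊓ commutator G).subgroupOf (Subgroup.center G)) =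
      minGens ↥(Subgroup.center G) := by
    rw [← hd]
    exact minGens_congr (Subgroup.subgroupOfEquivOfLe inf_le_left)
  open scoped IsMulCommutative in
  have hmem := mem_of_pow_eq_one hp hA
    ((Subgroup.center G ⊓ commutator G).subgroupOf (Subgroup.center G)) hmge
    (⟨w, hwc⟩ : ↥(Subgroup.center G)) (by
      apply Subtype.ext
      show w ^ p = 1
      exact hwp)
  rw [Subgroup.mem_subgroupOf] at hmem
  have hwcomm : w ∈ commutator G := hmem.2
  -- conclusion
  have hall : ∀ j, (χ j).ρ w = 1 := by
    intro j
    by_cases hji : j = i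
    · subst hji
      exact hcomm w hwcomm
    · exact hwN j hji
  exact hwne (hker w hall)
end
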